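/- Let H be a Hilbert space, A : H → H a compact self-adjoint continuous linear operator, μ > 0 and α > 0 real numbers with α < μ, and u ∈ H with ‖u‖ = 1 such that ‖A u − μ u‖ ≤ α. Then A has an eigenvalue μᵢ (i.e., there exists v ≠ 0 with A v = μᵢ v) satisfying |μᵢ − μ| ≤ α. -/
import Mathlib

open Filter Metric
open scoped RealInnerProductSpace Topology

/-- Generalized Cauchy–Schwarz for a positive symmetric operator:
`⟪P x, y⟫ ^ 2 ≤ ⟪P x, x⟫ * ⟪P y, y⟫`. -/
lemma aux_pos_cauchy_schwarz {H : Type*} [NormedAddCommGroup H] [InnerProductSpace ℝ H]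
    (P : H →L[ℝ] H) (hsym : ∀ x y : H, ⟪P x, y⟫ = ⟪x, P y⟫)
    (hpos : ∀ x : H, 0 ≤ ⟪P x, x⟫) (x y : H) :
    ⟪P x, y⟫ ^ 2 ≤ ⟪P x, x⟫ * ⟪P y, y⟫ := by
  have h : ∀ t : ℝ, 0 ≤ ⟪P y, y⟫ * (t * t) + (2 * ⟪P x, y⟫) * t + ⟪P x, x⟫ := by
    intro t
    have h0 := hpos (x + t • y)
    have hyx : ⟪P y, x⟫ = ⟪P x, y⟫ := by
      rw [hsym y x, real_inner_comm]
    simp only [map_add, map_smul, inner_add_left, inner_add_right, real_inner_smul_left,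
      real_inner_smul_right] at h0
    rw [hyx] at h0
    nlinarith [h0]
  have hd := discrim_le_zero h
  unfold discrim at hd
  nlinarith [hd]

/-- For a positive symmetric operator, `‖P x‖ ^ 2 ≤ ‖P‖ * ⟪P x, x⟫`. -/
lemma aux_norm_sq_le {H : Type*} [NormedAddCommGroup H] [InnerProductSpace ℝ H]
    (P : H →L[ℝ] H) (hsym : ∀ x y : H, ⟪P x, y⟫ = ⟪x, P y⟫)
    (hpos : ∀ x : H, 0 ≤ ⟪P x, x⟫) (x : H) :
    ‖P x‖ ^ 2 ≤ ‖P‖ * ⟪P x, x⟫ := by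
  have hcs := aux_pos_cauchy_schwarz P hsym hpos x (P x)
  rw [real_inner_self_eq_norm_sq] at hcs
  have h1 : ⟪P (P x), P x⟫ ≤ ‖P‖ * ‖P x‖ ^ 2 := by
    calc ⟪P (P x), P x⟫ ≤ ‖P (P x)‖ * ‖P x‖ := real_inner_le_norm _ _
      _ ≤ (‖P‖ * ‖P x‖) * ‖P x‖ := by
          gcongr; exact P.le_opNorm _
      _ = ‖P‖ * ‖P x‖ ^ 2 := by ring
  by_cases hx : ‖P x‖ = 0
  · rw [hx]
    simpa using mul_nonneg (norm_nonneg P) (hpos x)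
  · have hx2 : 0 < ‖P x‖ ^ 2 := by positivity
    have : (‖P x‖ ^ 2) * (‖P x‖ ^ 2) ≤ (‖P‖ * ⟪P x, x⟫) * (‖P x‖ ^ 2) := by
      calc (‖P x‖ ^ 2) * (‖P x‖ ^ 2) = (‖P x‖ ^ 2) ^ 2 := by ring
        _ ≤ ⟪P x, x⟫ * ⟪P (P x), P x⟫ := hcs
        _ ≤ ⟪P x, x⟫ * (‖P‖ * ‖P x‖ ^ 2) := by
            have := hpos x
            exact mul_le_mul_of_nonneg_left h1 this
        _ = (‖P‖ * ⟪P x, x⟫) * (‖P x‖ ^ 2) := by ring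
    exact le_of_mul_le_mul_right this hx2

/-- Vishik–Lyusternik lemma (first part, Lemma 3.3 of the paper): if `A` is a
compact self-adjoint operator on a Hilbert space, `0 < α < μ`, and `u` is a unit
vector with `‖A u - μ u‖ ≤ α`, then `A` has an eigenvalue `μᵢ` with `|μᵢ - μ| ≤ α`. -/
theorem exists_eigenvalue_near_of_approx_eigenvector
    {H : Type*} [NormedAddCommGroup H] [InnerProductSpace ℝ H] [CompleteSpace H]
    (A : H →L[ℝ] H) (hA : IsSelfAdjoint A) (hAcomp : IsCompactOperator A)
    (μ α : ℝ) (hμ : 0 < μ) (hα : 0 < α) (hαμ : α < μ)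
    (u : H) (hu : ‖u‖ = 1) (hclose : ‖A u - μ • u‖ ≤ α) :
    ∃ μi : ℝ, (∃ v : H, v ≠ 0 ∧ A v = μi • v) ∧ |μi - μ| ≤ α := by
  -- symmetry of A
  have Asym : ∀ x y : H, ⟪A x, y⟫ = ⟪x, A y⟫ := by
    intro x y
    conv_lhs => rw [← hA.adjoint_eq]
    exact ContinuousLinearMap.adjoint_inner_left A y x
  -- C = A - μ
  set C : H →L[ℝ] H := A - μ • (1 : H →L[ℝ] H) with hC
  have hCx : ∀ x : H, C x = A x - μ • x := by
    intro x; simp [hC]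
  have Csym : ∀ x y : H, ⟪C x, y⟫ = ⟪x, C y⟫ := by
    intro x y
    rw [hCx, hCx, inner_sub_left, inner_sub_right, Asym,
      real_inner_smul_left, real_inner_smul_right]
  -- the infimum β
  set S : Set ℝ := (fun x : H => ‖C x‖ ^ 2) '' {x : H | ‖x‖ = 1} with hS
  have hSne : S.Nonempty := ⟨‖C u‖ ^ 2, ⟨u, hu, rfl⟩⟩
  have hSbdd : BddBelow S := by
    refine ⟨0, ?_⟩
    rintro _ ⟨x, -, rfl⟩
    positivity
  set β : ℝ := sInf S with hβ
  have hβ0 : 0 ≤ β := by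
    apply le_csInf hSne
    rintro _ ⟨x, -, rfl⟩
    positivity
  have hβle : ∀ x : H, ‖x‖ = 1 → β ≤ ‖C x‖ ^ 2 := fun x hx =>
    csInf_le hSbdd ⟨x, hx, rfl⟩
  have hCu : ‖C u‖ ≤ α := by rw [hCx]; exact hclose
  have hβα : β ≤ α ^ 2 := by
    refine le_trans (hβle u hu) ?_
    have := norm_nonneg (C u)
    nlinarith
  have hquad : ∀ x : H, β * ‖x‖ ^ 2 ≤ ‖C x‖ ^ 2 := by
    intro x
    by_cases hx : x = 0
    · simp [hx]
    · have hn : (0:ℝ) < ‖x‖ := norm_pos_iff.2 hx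
      have hy : ‖(‖x‖⁻¹ • x)‖ = 1 := by
        rw [norm_smul, norm_inv, norm_norm, inv_mul_cancel₀ hn.ne']
      have h1 := hβle _ hy
      rw [map_smul, norm_smul, norm_inv, norm_norm, mul_pow] at h1
      have h2 : β * ‖x‖ ^ 2 ≤ (‖x‖⁻¹ ^ 2 * ‖C x‖ ^ 2) * ‖x‖ ^ 2 :=
        mul_le_mul_of_nonneg_right h1 (by positivity)
      calc β * ‖x‖ ^ 2 ≤ (‖x‖⁻¹ ^ 2 * ‖C x‖ ^ 2) * ‖x‖ ^ 2 := h2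
        _ = ‖C x‖ ^ 2 := by field_simp
  -- the compact part K and the operator P = C² - β = K + c • 1
  set c : ℝ := μ ^ 2 - β with hc
  have hcpos : 0 < c := by nlinarith
  set K : H →L[ℝ] H := A ∘L C - μ • A with hK
  have hKcomp : IsCompactOperator (⇑K) := by
    have h1 : IsCompactOperator (⇑A ∘ ⇑C) := hAcomp.comp_clm C
    have h2 : IsCompactOperator (μ • ⇑A) := hAcomp.smul μ
    have h3 : IsCompactOperator (⇑A ∘ ⇑C - μ • ⇑A) := h1.sub h2
    have : ⇑K = ⇑A ∘ ⇑C - μ • ⇑A := by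
      funext x; simp [hK]
    rw [this]; exact h3
  set P : H →L[ℝ] H := K + c • (1 : H →L[ℝ] H) with hP
  have hPapp : ∀ x : H, P x = C (C x) - β • x := by
    intro x
    simp only [hP, hK, ContinuousLinearMap.add_apply, ContinuousLinearMap.sub_apply,
      ContinuousLinearMap.smul_apply, ContinuousLinearMap.comp_apply,
      ContinuousLinearMap.one_apply, hCx, map_sub, map_smul, hc]
    module
  have hPsym : ∀ x y : H, ⟪P x, y⟫ = ⟪x, P y⟫ := by
    intro x y
    rw [hPapp, hPapp, inner_sub_left, inner_sub_right, Csym (C x) y, Csym x (C y),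
      real_inner_smul_left, real_inner_smul_right]
  have hPpos : ∀ x : H, 0 ≤ ⟪P x, x⟫ := by
    intro x
    rw [hPapp, inner_sub_left, Csym (C x) x, real_inner_self_eq_norm_sq,
      real_inner_smul_left, real_inner_self_eq_norm_sq]
    have := hquad x
    linarith
  have hPval : ∀ x : H, ‖x‖ = 1 → ⟪P x, x⟫ = ‖C x‖ ^ 2 - β := by
    intro x hx
    rw [hPapp, inner_sub_left, Csym (C x) x, real_inner_self_eq_norm_sq,
      real_inner_smul_left, real_inner_self_eq_norm_sq, hx]
    ring
  -- minimizing sequence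
  have hseq : ∀ n : ℕ, ∃ x : H, ‖x‖ = 1 ∧ ‖C x‖ ^ 2 < β + 1 / (n + 1) := by
    intro n
    obtain ⟨a, ⟨x, hx1, rfl⟩, ha⟩ := Real.lt_sInf_add_pos hSne
      (show (0:ℝ) < 1 / (n + 1) by positivity)
    exact ⟨x, hx1, ha⟩
  choose x hx1 hx2 using hseq
  have htend : Tendsto (fun n => ⟪P (x n), x n⟫) atTop (𝓝 0) := by
    apply squeeze_zero (fun n => hPpos (x n)) (g := fun n : ℕ => 1 / (n + 1))
    · intro n
      rw [hPval (x n) (hx1 n)]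
      have := hx2 n
      linarith
    · exact tendsto_one_div_add_atTop_nhds_zero_nat
  have hPx0 : Tendsto (fun n => P (x n)) atTop (𝓝 0) := by
    apply squeeze_zero_norm (a := fun n : ℕ => Real.sqrt (‖P‖ * ⟪P (x n), x n⟫))
    · intro n
      have h1 := aux_norm_sq_le P hPsym hPpos (x n)
      calc ‖P (x n)‖ = Real.sqrt (‖P (x n)‖ ^ 2) := (Real.sqrt_sq (norm_nonneg _)).symm
        _ ≤ Real.sqrt (‖P‖ * ⟪P (x n), x n⟫) := Real.sqrt_le_sqrt h1
    · have h0 : Tendsto (fun n => ‖P‖ * ⟪P (x n), x n⟫) atTop (𝓝 (‖P‖ * 0)) :=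
        htend.const_mul ‖P‖
      rw [mul_zero] at h0
      have hsq := (Real.continuous_sqrt.tendsto 0).comp h0
      rw [Real.sqrt_zero] at hsq
      exact hsq
  -- compactness: extract converging subsequence of K (x n)
  obtain ⟨M, hMc, hMsub⟩ := hKcomp.image_closedBall_subset_compact 1
  have hmem : ∀ n : ℕ, K (x n) ∈ M := by
    intro n
    apply hMsub
    exact ⟨x n, by simp [mem_closedBall, hx1 n], rfl⟩
  obtain ⟨w, -, φ, hφ, hKx⟩ := hMc.tendsto_subseq hmem
  -- the limit v
  have hxeq : ∀ n : ℕ, x n = c⁻¹ • (P (x n) - K (x n)) := by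
    intro n
    have h1 : P (x n) = K (x n) + c • x n := by
      simp [hP]
    rw [h1]
    rw [add_sub_cancel_left, smul_smul, inv_mul_cancel₀ hcpos.ne', one_smul]
  set v : H := c⁻¹ • ((0 : H) - w) with hv
  have hxv : Tendsto (fun n => x (φ n)) atTop (𝓝 v) := by
    have h1 : Tendsto (fun n => P (x (φ n))) atTop (𝓝 0) :=
      hPx0.comp hφ.tendsto_atTop
    have h2 : Tendsto (fun n => P (x (φ n)) - K (x (φ n))) atTop (𝓝 ((0:H) - w)) :=
      h1.sub hKx
    have h3 := h2.const_smul c⁻¹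
    have : (fun n => x (φ n)) = fun n => c⁻¹ • (P (x (φ n)) - K (x (φ n))) := by
      funext n; exact hxeq (φ n)
    rw [this]
    exact h3
  have hv1 : ‖v‖ = 1 := by
    have h1 : Tendsto (fun n => ‖x (φ n)‖) atTop (𝓝 ‖v‖) :=
      (continuous_norm.tendsto v).comp hxv
    have h2 : (fun n => ‖x (φ n)‖) = fun _ => (1:ℝ) := by
      funext n; exact hx1 (φ n)
    rw [h2] at h1
    exact (tendsto_nhds_unique tendsto_const_nhds h1).symm
  have hvne : v ≠ 0 := by
    intro h; rw [h, norm_zero] at hv1; exact one_ne_zero hv1.symm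
  have hPv : P v = 0 := by
    refine tendsto_nhds_unique ((P.continuous.tendsto v).comp hxv) ?_
    exact hPx0.comp hφ.tendsto_atTop
  have hCCv : C (C v) = β • v := by
    have := hPapp v
    rw [hPv] at this
    have := this.symm
    rwa [sub_eq_zero] at this
  -- extract an eigenvector
  set s : ℝ := Real.sqrt β with hs
  have hs0 : 0 ≤ s := Real.sqrt_nonneg β
  have hs2 : s ^ 2 = β := Real.sq_sqrt hβ0
  have hsα : s ≤ α := by
    calc s = Real.sqrt β := rfl
      _ ≤ Real.sqrt (α ^ 2) := Real.sqrt_le_sqrt hβα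
      _ = α := Real.sqrt_sq hα.le
  by_cases hw0 : C v + s • v = 0
  · refine ⟨μ - s, ⟨v, hvne, ?_⟩, ?_⟩
    · have h1 : C v = -s • v := by
        rw [neg_smul, ← sub_eq_zero, sub_neg_eq_add]; exact hw0
      rw [hCx] at h1
      rw [sub_eq_iff_eq_add] at h1
      rw [h1]
      module
    · rw [show μ - s - μ = -s by ring, abs_neg, abs_of_nonneg hs0]
      exact hsα
  · refine ⟨μ + s, ⟨C v + s • v, hw0, ?_⟩, ?_⟩
    · have h1 : C (C v + s • v) = s • (C v + s • v) := by
        rw [map_add, hCCv, map_smul, ← hs2]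
        module
      rw [hCx] at h1
      have h2 : A (C v + s • v) = μ • (C v + s • v) + s • (C v + s • v) := by
        rw [sub_eq_iff_eq_add] at h1
        rw [h1]; module
      rw [h2]; module
    · rw [show μ + s - μ = s by ring, abs_of_nonneg hs0]
      exact hsα
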